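/- arXiv:2505.05676 — 2 statements merged into one kernel-verified Lean document; each statement's English description precedes it below -/
import Mathlib

section
/- Let F, G, h̃₁, h̃₂ ∈ 𝒢 satisfy G∘h̃₁ = F∘h̃₂. Then there exist h₁, h₂ ∈ 𝒢 such that (1) G∘h₁ = F∘h₂ on [0,1], and (2) for every t ∈ [0,1] there exists u ∈ [0,1] with h₁(u) = t and h₂(u) = F†(G(t)); i.e., the graph of F†∘G is contained in the image of the curve u ↦ (h₁(u), h₂(u)). -/
open Set MeasureTheory

/-- `g` is piecewise-C¹ on `[0,1]`: continuous, differentiable except at finitely many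
points, with derivative continuous off that finite exceptional set. -/
def PiecewiseC1 (g : ℝ → ℝ) : Prop :=
  ContinuousOn g (Set.Icc 0 1) ∧
  ∃ S : Finset ℝ,
    (∀ x ∈ Set.Icc (0:ℝ) 1 \ S, DifferentiableAt ℝ g x) ∧
    ContinuousOn (deriv g) (Set.Icc 0 1 \ S)

/-- `g` has finitely many flat regions: the zero set of `g'` in `[0,1]` has finitely many
connected components. -/
def FiniteFlats (g : ℝ → ℝ) : Prop :=
  {C : Set ℝ | ∃ x ∈ {y ∈ Set.Icc (0:ℝ) 1 | deriv g y = 0},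
      C = connectedComponentIn {y ∈ Set.Icc (0:ℝ) 1 | deriv g y = 0} x}.Finite

/-- The class C¹_FF([0,1]). -/
def C1FF (g : ℝ → ℝ) : Prop := PiecewiseC1 g ∧ FiniteFlats g

/-- The set 𝒢 of admissible time warps: C¹_FF, non-decreasing on `[0,1]`,
with `g 0 = 0` and `g 1 = 1`. -/
def InG (g : ℝ → ℝ) : Prop :=
  C1FF g ∧ MonotoneOn g (Set.Icc 0 1) ∧ g 0 = 0 ∧ g 1 = 1

/-- Generalized inverse of `F : [a,b] → ℝ` : `F†(y) = inf {x ∈ [a,b] | F x > y}`,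
with `inf ∅ = b` (implemented by adjoining `{b}`). -/
noncomputable def genInv (a b : ℝ) (F : ℝ → ℝ) (y : ℝ) : ℝ :=
  sInf ({x ∈ Set.Icc a b | y < F x} ∪ {b})

/-!
Let `A = F† ∘ G` and `R t = t + A t`. Since `A` is monotone, `R` is strictly increasing and
expanding (`R t' - R t ≥ t' - t`), so `R†` is 1-Lipschitz. The curve `h₁ u = R† (2u)`,
`h₂ u = 2u - h₁ u` runs along the graph of `A` with its jumps filled in by vertical segments,
parametrised by half the ℓ¹-arclength; it passes through `(t, A t)` at `u = R t / 2`. Along it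
`G ∘ h₁ = F ∘ h₂`, because `F ∘ F† = id` on `[0, 1]` and `F`, `G` are continuous.

For regularity: outside finitely many `t`, either `G` is locally constant near `t` or `G t` is a
regular value of `F`, near which `F†` is a C¹ local inverse; so `A` is C¹ there and `R' ≥ 1`.
Outside finitely many `u`, `h₁` is then either locally constant (on a vertical segment) or a C¹
local inverse of `R` with `h₁' = 2 / R' > 0`, and `h₂' = 2 - h₁'` vanishes exactly where
`G' ∘ h₁` does. Hence the flat sets of `h₁` and `h₂` are, up to finitely many points, finite
unions of intervals.
-/

open Filter Topology

section GenInv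

variable {f : ℝ → ℝ} {a b x y y' : ℝ}

lemma bddBelow_genInv_set (f : ℝ → ℝ) (a b y : ℝ) :
    BddBelow ({x ∈ Icc a b | y < f x} ∪ {b}) :=
  (bddBelow_Icc.mono fun _ hx => hx.1).union bddBelow_singleton

lemma genInv_le (hx : x ∈ Icc a b) (h : y < f x) : genInv a b f y ≤ x :=
  csInf_le (bddBelow_genInv_set f a b y) (Or.inl ⟨hx, h⟩)

lemma genInv_le_right : genInv a b f y ≤ b :=
  csInf_le (bddBelow_genInv_set f a b y) (Or.inr rfl)

lemma genInv_mem_Icc (hab : a ≤ b) : genInv a b f y ∈ Icc a b := by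
  refine ⟨le_csInf ⟨b, Or.inr rfl⟩ ?_, genInv_le_right⟩
  rintro x (hx | rfl)
  exacts [hx.1.1, hab]

lemma apply_le_of_lt_genInv (hx : a ≤ x) (h : x < genInv a b f y) : f x ≤ y :=
  not_lt.1 fun hlt => h.not_ge (genInv_le ⟨hx, h.le.trans genInv_le_right⟩ hlt)

lemma lt_apply_of_genInv_lt (hf : MonotoneOn f (Icc a b)) (hx : x ∈ Icc a b)
    (h : genInv a b f y < x) : y < f x := by
  obtain ⟨e, he, hex⟩ := (csInf_lt_iff (bddBelow_genInv_set f a b y) ⟨b, Or.inr rfl⟩).1 h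
  rcases he with ⟨he, hye⟩ | rfl
  · exact hye.trans_le (hf he hx hex.le)
  · exact absurd hx.2 hex.not_ge

lemma monotone_genInv : Monotone (genInv a b f) := fun y₁ _ h =>
  csInf_le_csInf (bddBelow_genInv_set f a b y₁) ⟨b, Or.inr rfl⟩
    (union_subset_union_left _ fun _ hx => ⟨hx.1, h.trans_lt hx.2⟩)

lemma genInv_apply_of_forall_lt (hf : MonotoneOn f (Icc a b)) (hx : x ∈ Icc a b)
    (h : ∀ x' ∈ Ioc x b, f x < f x') : genInv a b f (f x) = x := by
  refine le_antisymm (le_of_forall_gt_imp_ge_of_dense fun c hc => ?_)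
    (le_csInf ⟨b, Or.inr rfl⟩ ?_)
  · rcases le_or_gt c b with hcb | hbc
    · exact genInv_le ⟨hx.1.trans hc.le, hcb⟩ (h c ⟨hc, hcb⟩)
    · exact genInv_le_right.trans hbc.le
  · rintro x' (⟨hx', hlt⟩ | rfl)
    · exact not_lt.1 fun h' => hlt.not_ge (hf hx' hx h'.le)
    · exact hx.2

lemma StrictMonoOn.genInv_apply (hf : StrictMonoOn f (Icc a b)) (hx : x ∈ Icc a b) :
    genInv a b f (f x) = x :=
  genInv_apply_of_forall_lt hf.monotoneOn hx fun _ hx' =>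
    hf hx ⟨hx.1.trans hx'.1.le, hx'.2⟩ hx'.1

lemma genInv_eq_right (h : ∀ x ∈ Icc a b, f x ≤ y) : genInv a b f y = b := by
  have : {x ∈ Icc a b | y < f x} = ∅ :=
    eq_empty_of_forall_notMem fun x hx => (h x hx.1).not_gt hx.2
  rw [genInv, this, empty_union, csInf_singleton]

lemma genInv_le_add_of_expanding (hab : a ≤ b)
    (hexp : ∀ x ∈ Icc a b, ∀ x' ∈ Icc a b, x ≤ x' → x' - x ≤ f x' - f x) (h : y ≤ y') :
    genInv a b f y' ≤ genInv a b f y + (y' - y) := by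
  have hf : MonotoneOn f (Icc a b) := fun x hx x' hx' hxx' => by
    linarith [hexp x hx x' hx' hxx']
  refine le_of_forall_gt_imp_ge_of_dense fun c hc => ?_
  rcases le_or_gt c b with hcb | hbc
  -- Just above `genInv y` the value of `f` exceeds `y`; from there to `c` it gains `> y' - y`.
  · obtain ⟨z, hz, hzc⟩ := exists_between (show genInv a b f y < c - (y' - y) by linarith)
    have hzI : z ∈ Icc a b := ⟨(genInv_mem_Icc hab).1.trans hz.le, by linarith⟩
    have hcI : c ∈ Icc a b := ⟨hzI.1.trans (by linarith), hcb⟩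
    have hgain := hexp z hzI c hcI (by linarith)
    exact genInv_le hcI (by linarith [lt_apply_of_genInv_lt hf hzI hz])
  · exact genInv_le_right.trans hbc.le

lemma lipschitzWith_genInv_of_expanding (hab : a ≤ b)
    (hexp : ∀ x ∈ Icc a b, ∀ x' ∈ Icc a b, x ≤ x' → x' - x ≤ f x' - f x) :
    LipschitzWith 1 (genInv a b f) := by
  refine LipschitzWith.of_le_add fun y y' => ?_
  rcases le_total y' y with h | h
  · rw [Real.dist_eq, abs_of_nonneg (by linarith)]
    exact genInv_le_add_of_expanding hab hexp h
  · exact (monotone_genInv h).trans (le_add_of_nonneg_right dist_nonneg)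

lemma apply_genInv_le (hf : ContinuousWithinAt f (Icc a b) (genInv a b f y))
    (ha : a < genInv a b f y) : f (genInv a b f y) ≤ y := by
  have := right_nhdsWithin_Ico_neBot ha
  have hlim : Tendsto f (𝓝[Ico a (genInv a b f y)] genInv a b f y) (𝓝 (f (genInv a b f y))) :=
    hf.mono (Ico_subset_Icc_self.trans (Icc_subset_Icc_right genInv_le_right))
  exact le_of_tendsto hlim
    (eventually_nhdsWithin_of_forall fun x hx => apply_le_of_lt_genInv hx.1 hx.2)

lemma le_apply_genInv (hmono : MonotoneOn f (Icc a b))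
    (hf : ContinuousWithinAt f (Icc a b) (genInv a b f y)) (hb : genInv a b f y ∈ Ico a b) :
    y ≤ f (genInv a b f y) := by
  have := left_nhdsWithin_Ioc_neBot hb.2
  have hlim : Tendsto f (𝓝[Ioc (genInv a b f y) b] genInv a b f y) (𝓝 (f (genInv a b f y))) :=
    hf.mono (Ioc_subset_Icc_self.trans (Icc_subset_Icc_left hb.1))
  exact ge_of_tendsto hlim (eventually_nhdsWithin_of_forall fun x hx =>
    (lt_apply_of_genInv_lt hmono ⟨hb.1.trans hx.1.le, hx.2⟩ hx.1).le)

lemma apply_genInv_eq (hab : a ≤ b) (hmono : MonotoneOn f (Icc a b))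
    (hf : ContinuousOn f (Icc a b)) (hy : y ∈ Icc (f a) (f b)) : f (genInv a b f y) = y := by
  have hz := genInv_mem_Icc (f := f) (y := y) hab
  apply le_antisymm
  · rcases hz.1.eq_or_lt with h | h
    · rw [← h]; exact hy.1
    · exact apply_genInv_le (hf _ hz) h
  · rcases hz.2.eq_or_lt with h | h
    · rw [h]; exact hy.2
    · exact le_apply_genInv hmono (hf _ hz) ⟨hz.1, h⟩

lemma continuousWithinAt_genInv_Ici : ContinuousWithinAt (genInv a b f) (Ici y) y := by
  refine tendsto_order.2 ⟨fun c hc => eventually_nhdsWithin_of_forall fun y' hy' =>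
    hc.trans_le (monotone_genInv hy'), fun c hc => ?_⟩
  obtain ⟨e, he, hec⟩ := (csInf_lt_iff (bddBelow_genInv_set f a b y) ⟨b, Or.inr rfl⟩).1 hc
  rcases he with ⟨he, hye⟩ | rfl
  · filter_upwards [nhdsWithin_le_nhds (eventually_lt_nhds hye)] with y' hy'
    exact (genInv_le he hy').trans_lt hec
  · exact Eventually.of_forall fun _ => genInv_le_right.trans_lt hec

end GenInv

section LocalInverse

variable {f : ℝ → ℝ} {a b x : ℝ}

lemma MonotoneOn.lt_of_hasDerivAt_pos {f' : ℝ} (hf : MonotoneOn f (Icc a b))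
    (hx : x ∈ Icc a b) (hd : HasDerivAt f f' x) (hpos : 0 < f') :
    ∀ x' ∈ Ioc x b, f x < f x' := by
  intro x' hx'
  have hslope : Tendsto (slope f x) (𝓝[>] x) (𝓝 f') :=
    (hasDerivAt_iff_tendsto_slope.1 hd).mono_left (nhdsWithin_mono _ fun _ h => ne_of_gt h)
  obtain ⟨z, hz, hzx⟩ :=
    ((hslope.eventually (eventually_gt_nhds hpos)).and (Ioo_mem_nhdsGT hx'.1)).exists
  rw [slope_def_field] at hz
  have hfz : f x < f z := sub_pos.1 ((div_pos_iff_of_pos_right (sub_pos.2 hzx.1)).1 hz)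
  exact hfz.trans_le (hf ⟨hx.1.trans hzx.1.le, hzx.2.le.trans hx'.2⟩
    ⟨hx.1.trans hx'.1.le, hx'.2⟩ hzx.2.le)

lemma genInv_apply_eventually (hf : MonotoneOn f (Icc a b)) (hx : x ∈ Ioo a b)
    (hc : ContDiffAt ℝ 1 f x) (hpos : 0 < deriv f x) :
    ∀ᶠ x' in 𝓝 x, genInv a b f (f x') = x' := by
  have hderiv : ContinuousAt (deriv f) x := (hc.derivWithin (m := 0) le_rfl).continuousAt
  filter_upwards [Ioo_mem_nhds hx.1 hx.2, hc.eventually (by simp),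
    hderiv.eventually (eventually_gt_nhds hpos)] with x' hx' hc' hpos'
  exact genInv_apply_of_forall_lt hf (Ioo_subset_Icc_self hx')
    (hf.lt_of_hasDerivAt_pos (Ioo_subset_Icc_self hx')
      (hc'.differentiableAt one_ne_zero).hasDerivAt hpos')

lemma contDiffAt_genInv (hf : MonotoneOn f (Icc a b)) (hx : x ∈ Ioo a b)
    (hc : ContDiffAt ℝ 1 f x) (hpos : 0 < deriv f x) :
    ContDiffAt ℝ 1 (genInv a b f) (f x) ∧ HasDerivAt (genInv a b f) (deriv f x)⁻¹ (f x) := by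
  -- `genInv a b f` agrees near `f x` with the local inverse of the inverse function theorem.
  have hs : HasStrictDerivAt f (deriv f x) x := hc.hasStrictDerivAt one_ne_zero
  have hs' := hs.hasStrictFDerivAt_equiv hpos.ne'
  have hleft := genInv_apply_eventually hf hx hc hpos
  set Φ := hs'.toOpenPartialHomeomorph f
  have hΦx : Φ.symm (f x) = x := hs'.localInverse_apply_image
  have hmem : f x ∈ Φ.target := hs'.image_mem_toOpenPartialHomeomorph_target
  have hL : ContDiffAt ℝ 1 Φ.symm (f x) :=
    Φ.contDiffAt_symm_deriv (f₀' := deriv f x) hpos.ne' hmem (by rw [hΦx]; exact hs.hasDerivAt)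
      (by rw [hΦx]; exact hc)
  have heq : genInv a b f =ᶠ[𝓝 (f x)] Φ.symm := by
    have hcont : Tendsto Φ.symm (𝓝 (f x)) (𝓝 x) := by
      simpa only [ContinuousAt, hΦx] using Φ.continuousAt_symm hmem
    filter_upwards [hcont.eventually hleft, Φ.eventually_right_inverse hmem] with y h1 h2
    rw [← h1]
    exact congrArg _ h2.symm
  exact ⟨hL.congr_of_eventuallyEq heq, (hs.to_local_left_inverse hpos.ne' hleft).hasDerivAt⟩

end LocalInverse

section Regularity

variable {g : ℝ → ℝ} {a b x : ℝ}

lemma PiecewiseC1.finite_not_contDiffAt (hg : PiecewiseC1 g) :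
    {x ∈ Ioo 0 1 | ¬ContDiffAt ℝ 1 g x}.Finite := by
  obtain ⟨-, S, hd, hc⟩ := hg
  have hopen : IsOpen (Ioo (0 : ℝ) 1 \ S) := isOpen_Ioo.sdiff S.finite_toSet.isClosed
  have hsub : Ioo (0 : ℝ) 1 \ S ⊆ Icc 0 1 \ S := sdiff_subset_sdiff_left Ioo_subset_Icc_self
  have hC1 : ContDiffOn ℝ 1 g (Ioo 0 1 \ S) := by
    rw [show (1 : WithTop ℕ∞) = 0 + 1 from rfl, contDiffOn_succ_iff_deriv_of_isOpen hopen]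
    exact ⟨fun x hx => (hd x (hsub hx)).differentiableWithinAt, by simp,
      contDiffOn_zero.2 (hc.mono hsub)⟩
  refine S.finite_toSet.subset fun x hx => by_contra fun hxS => hx.2 ?_
  exact hC1.contDiffAt (hopen.mem_nhds ⟨hx.1, hxS⟩)

lemma piecewiseC1_of_contDiffAt (hg : ContinuousOn g (Icc 0 1)) {B : Set ℝ} (hB : B.Finite)
    (h : ∀ x ∈ Ioo 0 1 \ B, ContDiffAt ℝ 1 g x) : PiecewiseC1 g := by
  have hS : (B ∪ {0, 1}).Finite := hB.union (toFinite _)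
  have hreg : ∀ x ∈ Icc 0 1 \ (hS.toFinset : Set ℝ), ContDiffAt ℝ 1 g x := by
    rintro x ⟨hx, hxS⟩
    simp only [Finite.coe_toFinset, mem_union, mem_insert_iff, mem_singleton_iff,
      not_or] at hxS
    exact h x ⟨⟨lt_of_le_of_ne hx.1 (Ne.symm hxS.2.1), lt_of_le_of_ne hx.2 hxS.2.2⟩, hxS.1⟩
  exact ⟨hg, hS.toFinset, fun x hx => (hreg x hx).differentiableAt one_ne_zero,
    fun x hx => ((hreg x hx).derivWithin (m := 0) le_rfl).continuousAt.continuousWithinAt⟩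

lemma MonotoneOn.deriv_nonneg_of_mem_Ioo (hg : MonotoneOn g (Icc a b)) (hx : x ∈ Ioo a b) :
    0 ≤ deriv g x := by
  rw [← derivWithin_of_mem_nhds (Icc_mem_nhds hx.1 hx.2)]
  exact hg.derivWithin_nonneg

lemma eq_of_hasDerivAt_zero_off_countable {s : Set ℝ} (hs : s.Countable) (hab : a ≤ b)
    (hc : ContinuousOn g (Icc a b)) (hd : ∀ x ∈ Ioo a b \ s, HasDerivAt g 0 x) : g a = g b := by
  have := integral_eq_of_hasDerivAt_off_countable_of_le g (fun _ => 0) hab hs hc hd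
    intervalIntegrable_const
  simp only [intervalIntegral.integral_zero] at this
  linarith

lemma finite_image_of_finiteFlats (hg : PiecewiseC1 g) (hff : FiniteFlats g) :
    (g '' {x ∈ Icc 0 1 | deriv g x = 0}).Finite := by
  set Z := {x ∈ Icc (0 : ℝ) 1 | deriv g x = 0}
  obtain ⟨hcont, S, hd, -⟩ := hg
  refine (hff.biUnion (t := fun C => g '' C) fun C hC => ?_).subset ?_
  · obtain ⟨x₀, -, rfl⟩ := hC
    have hCo := (isPreconnected_connectedComponentIn (F := Z) (x := x₀)).ordConnected
    have hCZ := connectedComponentIn_subset Z x₀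
    have key : ∀ x ∈ connectedComponentIn Z x₀, ∀ x' ∈ connectedComponentIn Z x₀, x ≤ x' →
        g x = g x' := fun x hx x' hx' hxx' =>
      eq_of_hasDerivAt_zero_off_countable S.countable_toSet hxx'
        (hcont.mono fun z hz => (hCZ (hCo.out hx hx' hz)).1) fun z hz => by
          have hzZ := hCZ (hCo.out hx hx' (Ioo_subset_Icc_self hz.1))
          exact hzZ.2 ▸ (hd z ⟨hzZ.1, hz.2⟩).hasDerivAt
    refine Subsingleton.finite ?_
    rintro _ ⟨x, hx, rfl⟩ _ ⟨x', hx', rfl⟩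
    rcases le_total x x' with h | h
    exacts [key x hx x' hx' h, (key x' hx' x hx h).symm]
  · rintro _ ⟨x, hx, rfl⟩
    exact mem_biUnion ⟨x, hx, rfl⟩ ⟨x, mem_connectedComponentIn hx, rfl⟩

end Regularity

section InG

variable {g : ℝ → ℝ}

lemma InG.piecewiseC1 (hg : InG g) : PiecewiseC1 g := hg.1.1

lemma InG.finiteFlats (hg : InG g) : FiniteFlats g := hg.1.2

lemma InG.continuousOn (hg : InG g) : ContinuousOn g (Icc 0 1) := hg.1.1.1

lemma InG.monotoneOn (hg : InG g) : MonotoneOn g (Icc 0 1) := hg.2.1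

lemma InG.map_zero (hg : InG g) : g 0 = 0 := hg.2.2.1

lemma InG.map_one (hg : InG g) : g 1 = 1 := hg.2.2.2

lemma InG.mapsTo (hg : InG g) : MapsTo g (Icc 0 1) (Icc 0 1) := fun _ ht =>
  ⟨hg.map_zero ▸ hg.monotoneOn (left_mem_Icc.2 zero_le_one) ht ht.1,
    hg.map_one ▸ hg.monotoneOn ht (right_mem_Icc.2 zero_le_one) ht.2⟩

end InG

def critPts (F : ℝ → ℝ) : Set ℝ :=
  {0, 1} ∪ {x ∈ Ioo 0 1 | ¬ContDiffAt ℝ 1 F x} ∪ {x ∈ Icc 0 1 | deriv F x = 0}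

lemma InG.finite_image_critPts {F : ℝ → ℝ} (hF : InG F) : (F '' critPts F).Finite := by
  rw [critPts, image_union, image_union]
  exact (((toFinite _).image F).union (hF.piecewiseC1.finite_not_contDiffAt.image F)).union
    (finite_image_of_finiteFlats hF.piecewiseC1 hF.finiteFlats)

def levelEnds (f : ℝ → ℝ) (a b y : ℝ) : Set ℝ :=
  {sInf {x ∈ Icc a b | f x = y}, sSup {x ∈ Icc a b | f x = y}}

lemma eventuallyEq_of_notMem_levelEnds {f : ℝ → ℝ} {a b x : ℝ} (hf : MonotoneOn f (Icc a b))
    (hx : x ∈ Icc a b) (hx' : x ∉ levelEnds f a b (f x)) : f =ᶠ[𝓝 x] fun _ => f x := by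
  set E := {x' ∈ Icc a b | f x' = f x}
  have hxE : x ∈ E := ⟨hx, rfl⟩
  have hbdd : BddBelow E ∧ BddAbove E := ⟨⟨a, fun _ h => h.1.1⟩, ⟨b, fun _ h => h.1.2⟩⟩
  simp only [levelEnds, mem_insert_iff, mem_singleton_iff, not_or] at hx'
  obtain ⟨e, he, hex⟩ := (csInf_lt_iff hbdd.1 ⟨x, hxE⟩).1
    (lt_of_le_of_ne (csInf_le hbdd.1 hxE) (Ne.symm hx'.1))
  obtain ⟨e', he', hxe'⟩ := (lt_csSup_iff hbdd.2 ⟨x, hxE⟩).1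
    (lt_of_le_of_ne (le_csSup hbdd.2 hxE) hx'.2)
  filter_upwards [Ioo_mem_nhds hex hxe'] with x' hx''
  have hx'I : x' ∈ Icc a b := ⟨he.1.1.trans hx''.1.le, hx''.2.le.trans he'.1.2⟩
  exact le_antisymm (he'.2 ▸ hf hx'I he'.1 hx''.2.le) (he.2 ▸ hf he.1 hx'I hx''.1.le)

def IsFiniteUnionOfIntervals (s : Set ℝ) : Prop :=
  ∃ P : Set (Set ℝ), P.Finite ∧ (∀ p ∈ P, p.OrdConnected) ∧ ⋃₀ P = s

lemma Set.OrdConnected.isFiniteUnionOfIntervals {s : Set ℝ} (hs : s.OrdConnected) :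
    IsFiniteUnionOfIntervals s :=
  ⟨{s}, finite_singleton s, by simpa using hs, sUnion_singleton s⟩

namespace IsFiniteUnionOfIntervals

variable {s t : Set ℝ}

lemma union (hs : IsFiniteUnionOfIntervals s) (ht : IsFiniteUnionOfIntervals t) :
    IsFiniteUnionOfIntervals (s ∪ t) := by
  obtain ⟨P, hP, hPo, rfl⟩ := hs
  obtain ⟨Q, hQ, hQo, rfl⟩ := ht
  exact ⟨P ∪ Q, hP.union hQ, fun p hp => hp.elim (hPo p) (hQo p), sUnion_union P Q⟩

lemma biUnion {ι : Type*} {I : Set ι} (hI : I.Finite) {s : ι → Set ℝ}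
    (h : ∀ i ∈ I, IsFiniteUnionOfIntervals (s i)) :
    IsFiniteUnionOfIntervals (⋃ i ∈ I, s i) := by
  choose! P hP hPo hPs using h
  refine ⟨⋃ i ∈ I, P i, hI.biUnion hP, ?_, ?_⟩
  · simp only [mem_iUnion₂]
    rintro p ⟨i, hi, hp⟩
    exact hPo i hi p hp
  · simp only [sUnion_iUnion]
    exact iUnion₂_congr fun i hi => hPs i hi

lemma _root_.Set.Finite.isFiniteUnionOfIntervals (hs : s.Finite) :
    IsFiniteUnionOfIntervals s := by
  simpa using biUnion hs fun x _ => (ordConnected_singleton (a := x)).isFiniteUnionOfIntervals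

lemma inter_ordConnected (hs : IsFiniteUnionOfIntervals s) (ht : t.OrdConnected) :
    IsFiniteUnionOfIntervals (s ∩ t) := by
  obtain ⟨P, hP, hPo, rfl⟩ := hs
  refine ⟨(· ∩ t) '' P, hP.image _, ?_, by rw [sUnion_image, sUnion_eq_biUnion, iUnion₂_inter]⟩
  rintro _ ⟨p, hp, rfl⟩
  exact (hPo p hp).inter ht

lemma diff_finite (hs : IsFiniteUnionOfIntervals s) (ht : t.Finite) :
    IsFiniteUnionOfIntervals (s \ t) := by
  induction t, ht using Set.Finite.induction_on with
  | empty => simpa using hs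
  | @insert x t _ _ ih =>
    rw [show s \ insert x t = (s \ t) ∩ (Iio x ∪ Ioi x) by
      rw [Iio_union_Ioi, insert_eq, union_comm, ← sdiff_sdiff]; rfl, inter_union_distrib_left]
    exact (ih.inter_ordConnected ordConnected_Iio).union (ih.inter_ordConnected ordConnected_Ioi)

lemma preimage (hs : IsFiniteUnionOfIntervals s) {f : ℝ → ℝ} (hf : MonotoneOn f t)
    (ht : t.OrdConnected) : IsFiniteUnionOfIntervals (t ∩ f ⁻¹' s) := by
  obtain ⟨P, hP, hPo, rfl⟩ := hs
  refine ⟨(fun p => t ∩ f ⁻¹' p) '' P, hP.image _, ?_, ?_⟩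
  · rintro _ ⟨p, hp, rfl⟩
    refine ⟨fun x hx y hy z hz => ⟨ht.out hx.1 hy.1 hz, ?_⟩⟩
    exact (hPo p hp).out hx.2 hy.2 ⟨hf hx.1 (ht.out hx.1 hy.1 hz) hz.1,
      hf (ht.out hx.1 hy.1 hz) hy.1 hz.2⟩
  · rw [sUnion_image, preimage_sUnion, inter_iUnion₂]

lemma finite_connectedComponentIn (hs : IsFiniteUnionOfIntervals s) :
    {C | ∃ x ∈ s, C = connectedComponentIn s x}.Finite := by
  obtain ⟨P, hP, hPo, rfl⟩ := hs
  refine (hP.biUnion (t := fun p => connectedComponentIn (⋃₀ P) '' p) fun p hp => ?_).subset ?_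
  · refine Subsingleton.finite ?_
    rintro _ ⟨x, hx, rfl⟩ _ ⟨y, hy, rfl⟩
    exact connectedComponentIn_eq ((hPo p hp).isPreconnected.subset_connectedComponentIn hx
      (subset_sUnion_of_mem hp) hy)
  · rintro _ ⟨x, ⟨p, hp, hx⟩, rfl⟩
    exact mem_biUnion hp ⟨x, hx, rfl⟩

lemma of_finite_connectedComponentIn (h : {C | ∃ x ∈ s, C = connectedComponentIn s x}.Finite) :
    IsFiniteUnionOfIntervals s := by
  refine ⟨_, h, ?_, ?_⟩
  · rintro _ ⟨x, -, rfl⟩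
    exact isPreconnected_connectedComponentIn.ordConnected
  · refine subset_antisymm (sUnion_subset ?_) fun x hx =>
      ⟨_, ⟨x, hx, rfl⟩, mem_connectedComponentIn hx⟩
    rintro _ ⟨x, -, rfl⟩
    exact connectedComponentIn_subset s x

lemma of_diff_eq {Z S B : Set ℝ} (hS : IsFiniteUnionOfIntervals S)
    (hB : B.Finite) (h : Z \ B = S \ B) : IsFiniteUnionOfIntervals Z := by
  rw [← sdiff_union_inter Z B, h]
  exact (hS.diff_finite hB).union (hB.subset inter_subset_right).isFiniteUnionOfIntervals

end IsFiniteUnionOfIntervals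

namespace GraphCurve

-- In the notation of the header: `invComp = A`, `arcLen = R`, `fst = h₁`, `snd = h₂`.
noncomputable def invComp (F G : ℝ → ℝ) (t : ℝ) : ℝ := genInv 0 1 F (G t)

noncomputable def arcLen (F G : ℝ → ℝ) (t : ℝ) : ℝ := t + invComp F G t

noncomputable def fst (F G : ℝ → ℝ) (u : ℝ) : ℝ := genInv 0 1 (arcLen F G) (2 * u)

noncomputable def snd (F G : ℝ → ℝ) (u : ℝ) : ℝ := 2 * u - fst F G u

variable {F G : ℝ → ℝ} {t u : ℝ}

lemma invComp_mem_Icc : invComp F G t ∈ Icc 0 1 := genInv_mem_Icc zero_le_one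

lemma monotoneOn_invComp (hG : MonotoneOn G (Icc 0 1)) : MonotoneOn (invComp F G) (Icc 0 1) :=
  fun _ hs _ ht hst => monotone_genInv (hG hs ht hst)

lemma apply_invComp (hF : InG F) (hG : InG G) (ht : t ∈ Icc 0 1) :
    F (invComp F G t) = G t :=
  apply_genInv_eq zero_le_one hF.monotoneOn hF.continuousOn
    (by rw [hF.map_zero, hF.map_one]; exact hG.mapsTo ht)

lemma invComp_one (hF : InG F) (hG : InG G) : invComp F G 1 = 1 := by
  rw [invComp, hG.map_one]
  exact genInv_eq_right fun x hx => hF.map_one ▸ hF.monotoneOn hx (right_mem_Icc.2 zero_le_one) hx.2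

lemma continuousWithinAt_invComp (hG : InG G) (ht : t ∈ Icc 0 1) :
    ContinuousWithinAt (invComp F G) (Icc t 1) t :=
  continuousWithinAt_genInv_Ici.comp ((hG.continuousOn t ht).mono (Icc_subset_Icc_left ht.1))
    fun _ hs => hG.monotoneOn ht ⟨ht.1.trans hs.1, hs.2⟩ hs.1

lemma sub_le_arcLen_sub (hG : MonotoneOn G (Icc 0 1)) :
    ∀ t ∈ Icc 0 1, ∀ t' ∈ Icc 0 1, t ≤ t' → t' - t ≤ arcLen F G t' - arcLen F G t :=
  fun t ht t' ht' h => by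
    have := monotoneOn_invComp (F := F) hG ht ht' h
    simp only [arcLen]
    linarith

lemma strictMonoOn_arcLen (hG : MonotoneOn G (Icc 0 1)) : StrictMonoOn (arcLen F G) (Icc 0 1) :=
  fun t ht t' ht' h => by linarith [sub_le_arcLen_sub (F := F) hG t ht t' ht' h.le]

lemma le_arcLen : t ≤ arcLen F G t := le_add_of_nonneg_right invComp_mem_Icc.1

lemma arcLen_le_two (ht : t ≤ 1) : arcLen F G t ≤ 2 := by
  have := (invComp_mem_Icc (F := F) (G := G) (t := t)).2
  simp only [arcLen]
  linarith

lemma arcLen_one (hF : InG F) (hG : InG G) : arcLen F G 1 = 2 := by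
  rw [arcLen, invComp_one hF hG]
  norm_num

lemma fst_mem_Icc : fst F G u ∈ Icc 0 1 := genInv_mem_Icc zero_le_one

lemma monotone_fst : Monotone (fst F G) := fun _ _ h => monotone_genInv (by linarith)

lemma fst_le_add (hG : MonotoneOn G (Icc 0 1)) {u' : ℝ} (h : u ≤ u') :
    fst F G u' ≤ fst F G u + 2 * (u' - u) := by
  have := genInv_le_add_of_expanding zero_le_one (sub_le_arcLen_sub (F := F) hG)
    (mul_le_mul_of_nonneg_left h zero_le_two)
  simp only [fst]
  linarith

lemma continuous_fst (hG : MonotoneOn G (Icc 0 1)) : Continuous (fst F G) :=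
  (lipschitzWith_genInv_of_expanding zero_le_one (sub_le_arcLen_sub hG)).continuous.comp
    (continuous_const.mul continuous_id)

lemma fst_zero (hG : MonotoneOn G (Icc 0 1)) : fst F G 0 = 0 := by
  refine le_antisymm ?_ fst_mem_Icc.1
  have := monotone_genInv (a := 0) (b := 1) (f := arcLen F G) (le_arcLen (F := F) (G := G) (t := 0))
  rw [(strictMonoOn_arcLen hG).genInv_apply (left_mem_Icc.2 zero_le_one)] at this
  simpa [fst] using this

lemma fst_one : fst F G 1 = 1 :=
  genInv_eq_right fun _ ht => by simpa using arcLen_le_two ht.2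

lemma monotone_snd (hG : MonotoneOn G (Icc 0 1)) : Monotone (snd F G) := fun u u' h => by
  have := fst_le_add (F := F) hG h
  simp only [snd]
  linarith

lemma snd_zero (hG : MonotoneOn G (Icc 0 1)) : snd F G 0 = 0 := by simp [snd, fst_zero hG]

lemma snd_one : snd F G 1 = 1 := by norm_num [snd, fst_one]

lemma snd_mem_Icc (hG : MonotoneOn G (Icc 0 1)) (hu : u ∈ Icc 0 1) : snd F G u ∈ Icc 0 1 :=
  ⟨snd_zero (F := F) hG ▸ monotone_snd hG hu.1, snd_one (F := F) (G := G) ▸ monotone_snd hG hu.2⟩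

lemma fst_arcLen_half (hG : MonotoneOn G (Icc 0 1)) (ht : t ∈ Icc 0 1) :
    fst F G (arcLen F G t / 2) = t := by
  rw [fst, mul_div_cancel₀ _ two_ne_zero, (strictMonoOn_arcLen hG).genInv_apply ht]

lemma snd_arcLen_half (hG : MonotoneOn G (Icc 0 1)) (ht : t ∈ Icc 0 1) :
    snd F G (arcLen F G t / 2) = invComp F G t := by
  rw [snd, fst_arcLen_half hG ht, arcLen]
  ring

lemma le_arcLen_fst (hF : InG F) (hG : InG G) (hu : u ≤ 1) : 2 * u ≤ arcLen F G (fst F G u) := by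
  rcases fst_mem_Icc.2.eq_or_lt with h | h
  · rw [h, arcLen_one hF hG]
    linarith
  · have := left_nhdsWithin_Ioc_neBot h
    have hlim : Tendsto (arcLen F G) (𝓝[Ioc (fst F G u) 1] fst F G u)
        (𝓝 (arcLen F G (fst F G u))) :=
      (continuousWithinAt_id.add (continuousWithinAt_invComp hG fst_mem_Icc)).mono
        Ioc_subset_Icc_self
    exact ge_of_tendsto hlim (eventually_nhdsWithin_of_forall fun t ht =>
      (lt_apply_of_genInv_lt (strictMonoOn_arcLen hG.monotoneOn).monotoneOn
        ⟨fst_mem_Icc.1.trans ht.1.le, ht.2⟩ ht.1).le)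

lemma apply_snd_le_apply_fst (hF : InG F) (hG : InG G) (hu : u ∈ Icc 0 1) :
    F (snd F G u) ≤ G (fst F G u) :=
  calc F (snd F G u) ≤ F (invComp F G (fst F G u)) := by
        refine hF.monotoneOn (snd_mem_Icc hG.monotoneOn hu) invComp_mem_Icc ?_
        have := le_arcLen_fst hF hG hu.2
        simp only [snd, arcLen] at this ⊢
        linarith
    _ = G (fst F G u) := apply_invComp hF hG fst_mem_Icc

lemma apply_fst_le_apply_snd (hF : InG F) (hG : InG G) (hu : u ∈ Icc 0 1) :
    G (fst F G u) ≤ F (snd F G u) := by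
  set t₀ := fst F G u
  set x := snd F G u
  have ht₀ : t₀ ∈ Icc 0 1 := fst_mem_Icc
  have hx : x ∈ Icc 0 1 := snd_mem_Icc hG.monotoneOn hu
  rcases ht₀.1.eq_or_lt with h0 | h0
  · rw [← h0, hG.map_zero, ← hF.map_zero]
    exact hF.monotoneOn (left_mem_Icc.2 zero_le_one) hx hx.1
  -- For `t < t₀`, `arcLen t ≤ 2u` puts `(t, F† (G t))` below `(t, x + (t₀ - t))`; let `t → t₀`.
  -- The bound is clipped at `1` because `F` is only controlled on `[0, 1]`.
  set y : ℝ → ℝ := fun t => min 1 (x + (t₀ - t))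
  have hy : ∀ t ∈ Ico 0 t₀, y t ∈ Icc 0 1 := fun t ht =>
    ⟨le_min zero_le_one (by linarith [hx.1, ht.2]), min_le_left _ _⟩
  have hbelow : ∀ t ∈ Ico 0 t₀, G t ≤ F (y t) := by
    intro t ht
    have hR : arcLen F G t ≤ 2 * u := apply_le_of_lt_genInv ht.1 ht.2
    rw [← apply_invComp hF hG ⟨ht.1, ht.2.le.trans ht₀.2⟩]
    refine hF.monotoneOn invComp_mem_Icc (hy t ht) (le_min invComp_mem_Icc.2 ?_)
    simp only [arcLen, x, snd] at hR ⊢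
    linarith
  have := right_nhdsWithin_Ico_neBot h0
  have hlimG : Tendsto G (𝓝[Ico 0 t₀] t₀) (𝓝 (G t₀)) :=
    (hG.continuousOn _ ht₀).mono (Ico_subset_Icc_self.trans (Icc_subset_Icc_right ht₀.2))
  have hlimy : Tendsto y (𝓝[Ico 0 t₀] t₀) (𝓝[Icc 0 1] x) := by
    refine tendsto_nhdsWithin_iff.2 ⟨?_, eventually_nhdsWithin_of_forall hy⟩
    have hc : Continuous y := by fun_prop
    simpa [y, min_eq_right hx.2] using
      (hc.tendsto t₀).mono_left (nhdsWithin_le_nhds (s := Ico 0 t₀))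
  exact le_of_tendsto_of_tendsto hlimG ((hF.continuousOn x hx).tendsto.comp hlimy)
    (eventually_nhdsWithin_of_forall hbelow)

lemma apply_fst_eq_apply_snd (hF : InG F) (hG : InG G) (hu : u ∈ Icc 0 1) :
    G (fst F G u) = F (snd F G u) :=
  (apply_fst_le_apply_snd hF hG hu).antisymm (apply_snd_le_apply_fst hF hG hu)

-- Off `tSing F G`, either `G` is locally constant or `G t` is a regular value of `F`; off
-- `uSing F G`, either `fst F G` is locally constant or `fst F G u ∉ tSing F G`.
def tSing (F G : ℝ → ℝ) : Set ℝ :=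
  {0, 1} ∪ {t ∈ Ioo 0 1 | ¬ContDiffAt ℝ 1 G t} ∪ ⋃ y ∈ F '' critPts F, levelEnds G 0 1 y

def uSing (F G : ℝ → ℝ) : Set ℝ := {0, 1} ∪ ⋃ t ∈ tSing F G, levelEnds (fst F G) 0 1 t

lemma finite_tSing (hF : InG F) (hG : InG G) : (tSing F G).Finite :=
  ((toFinite _).union hG.piecewiseC1.finite_not_contDiffAt).union
    (hF.finite_image_critPts.biUnion fun _ _ => (finite_singleton _).insert _)

lemma finite_uSing (hF : InG F) (hG : InG G) : (uSing F G).Finite :=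
  (toFinite _).union ((finite_tSing hF hG).biUnion fun _ _ => (finite_singleton _).insert _)

lemma contDiffAt_invComp (hF : InG F) (hG : InG G) (ht : t ∈ Ioo 0 1) (hT : t ∉ tSing F G) :
    ContDiffAt ℝ 1 (invComp F G) t ∧ ∃ c > 0, deriv (invComp F G) t = c * deriv G t := by
  have hGC : ContDiffAt ℝ 1 G t := by_contra fun h => hT (Or.inl (Or.inr ⟨ht, h⟩))
  by_cases hy : G t ∈ F '' critPts F
  · have hconst : G =ᶠ[𝓝 t] fun _ => G t := eventuallyEq_of_notMem_levelEnds hG.monotoneOn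
      (Ioo_subset_Icc_self ht) fun h => hT (Or.inr (mem_biUnion hy h))
    have hA : invComp F G =ᶠ[𝓝 t] fun _ => invComp F G t := hconst.fun_comp (genInv 0 1 F)
    refine ⟨contDiffAt_const.congr_of_eventuallyEq hA, 1, one_pos, ?_⟩
    rw [hA.deriv_eq, hconst.deriv_eq, deriv_const, deriv_const, mul_zero]
  · have hx : genInv 0 1 F (G t) ∈ Icc 0 1 := genInv_mem_Icc zero_le_one
    have hFx : F (genInv 0 1 F (G t)) = G t := apply_invComp hF hG (Ioo_subset_Icc_self ht)
    have hcrit : genInv 0 1 F (G t) ∉ critPts F := fun h => hy ⟨_, h, hFx⟩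
    simp only [critPts, mem_union, mem_insert_iff, mem_singleton_iff, mem_ofPred_eq, not_or,
      not_and, not_not] at hcrit
    obtain ⟨⟨⟨h0, h1⟩, hC⟩, hD⟩ := hcrit
    have hxI : genInv 0 1 F (G t) ∈ Ioo 0 1 :=
      ⟨lt_of_le_of_ne hx.1 (Ne.symm h0), lt_of_le_of_ne hx.2 h1⟩
    have hpos : 0 < deriv F (genInv 0 1 F (G t)) :=
      lt_of_le_of_ne (hF.monotoneOn.deriv_nonneg_of_mem_Ioo hxI) (Ne.symm (hD hx))
    obtain ⟨hIC, hId⟩ := contDiffAt_genInv hF.monotoneOn hxI (hC hxI) hpos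
    rw [hFx] at hIC hId
    exact ⟨hIC.comp t hGC, _, inv_pos.2 hpos,
      (hId.comp t (hGC.differentiableAt one_ne_zero).hasDerivAt).deriv⟩

lemma mem_Ioo_of_notMem_tSing (ht : t ∈ Icc 0 1) (hT : t ∉ tSing F G) : t ∈ Ioo 0 1 :=
  ⟨lt_of_le_of_ne ht.1 fun h => hT (Or.inl (Or.inl (Or.inl h.symm))),
    lt_of_le_of_ne ht.2 fun h => hT (Or.inl (Or.inl (Or.inr h)))⟩

lemma contDiffAt_arcLen (hF : InG F) (hG : InG G) (ht : t ∈ Ioo 0 1) (hT : t ∉ tSing F G) :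
    ContDiffAt ℝ 1 (arcLen F G) t ∧ ∃ c > 0, deriv (arcLen F G) t = 1 + c * deriv G t := by
  obtain ⟨hAC, c, hc, hAd⟩ := contDiffAt_invComp hF hG ht hT
  refine ⟨contDiffAt_id.add hAC, c, hc, ?_⟩
  rw [← hAd]
  exact ((hasDerivAt_id t).add (hAC.differentiableAt one_ne_zero).hasDerivAt).deriv

lemma arcLen_fst (hG : MonotoneOn G (Icc 0 1)) (ht : fst F G u ∈ Ioo 0 1)
    (hc : ContinuousAt (arcLen F G) (fst F G u)) : arcLen F G (fst F G u) = 2 * u :=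
  le_antisymm (apply_genInv_le hc.continuousWithinAt ht.1)
    (le_apply_genInv (strictMonoOn_arcLen hG).monotoneOn hc.continuousWithinAt ⟨ht.1.le, ht.2⟩)

lemma contDiffAt_fst_of_notMem_tSing (hF : InG F) (hG : InG G) (hT : fst F G u ∉ tSing F G) :
    ContDiffAt ℝ 1 (fst F G) u ∧ deriv (fst F G) u ≠ 0 ∧
      (deriv (fst F G) u = 2 ↔ deriv G (fst F G u) = 0) := by
  set t := fst F G u
  have ht : t ∈ Ioo 0 1 := mem_Ioo_of_notMem_tSing fst_mem_Icc hT
  obtain ⟨hRC, c, hc, hRd⟩ := contDiffAt_arcLen hF hG ht hT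
  have hG' := hG.monotoneOn.deriv_nonneg_of_mem_Ioo ht
  have hRpos : 0 < deriv (arcLen F G) t := by
    rw [hRd]
    positivity
  obtain ⟨hIC, hId⟩ :=
    contDiffAt_genInv (strictMonoOn_arcLen hG.monotoneOn).monotoneOn ht hRC hRpos
  rw [arcLen_fst hG.monotoneOn ht hRC.continuousAt] at hIC hId
  have hfd : HasDerivAt (fst F G) ((deriv (arcLen F G) t)⁻¹ * 2) u :=
    hId.comp u (hasDerivAt_const_mul 2)
  refine ⟨hIC.comp u (contDiffAt_const.mul contDiffAt_id), ?_⟩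
  rw [hfd.deriv, hRd]
  refine ⟨by positivity, ⟨fun h => ?_, fun h => by rw [h]; norm_num⟩⟩
  have : c * deriv G t = 0 := by
    field_simp at h
    linarith
  exact (mul_eq_zero.1 this).resolve_left hc.ne'

lemma fst_eventuallyEq_of_mem_tSing (hu : u ∈ Icc 0 1) (hU : u ∉ uSing F G)
    (hT : fst F G u ∈ tSing F G) : fst F G =ᶠ[𝓝 u] fun _ => fst F G u :=
  eventuallyEq_of_notMem_levelEnds (monotone_fst.monotoneOn _) hu
    fun h => hU (Or.inr (mem_biUnion hT h))

lemma mem_Ioo_of_notMem_uSing (hu : u ∈ Icc 0 1) (hU : u ∉ uSing F G) : u ∈ Ioo 0 1 :=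
  ⟨lt_of_le_of_ne hu.1 fun h => hU (Or.inl (Or.inl h.symm)),
    lt_of_le_of_ne hu.2 fun h => hU (Or.inl (Or.inr h))⟩

lemma contDiffAt_fst (hF : InG F) (hG : InG G) (hu : u ∈ Ioo 0 1 \ uSing F G) :
    ContDiffAt ℝ 1 (fst F G) u := by
  by_cases hT : fst F G u ∈ tSing F G
  · exact contDiffAt_const.congr_of_eventuallyEq
      (fst_eventuallyEq_of_mem_tSing (Ioo_subset_Icc_self hu.1) hu.2 hT)
  · exact (contDiffAt_fst_of_notMem_tSing hF hG hT).1

lemma contDiffAt_snd (hF : InG F) (hG : InG G) (hu : u ∈ Ioo 0 1 \ uSing F G) :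
    ContDiffAt ℝ 1 (snd F G) u :=
  (contDiffAt_const.mul contDiffAt_id).sub (contDiffAt_fst hF hG hu)

lemma deriv_snd (h : DifferentiableAt ℝ (fst F G) u) :
    deriv (snd F G) u = 2 - deriv (fst F G) u := by
  exact ((hasDerivAt_const_mul 2).sub h.hasDerivAt).deriv

lemma piecewiseC1_fst (hF : InG F) (hG : InG G) : PiecewiseC1 (fst F G) :=
  piecewiseC1_of_contDiffAt (continuous_fst hG.monotoneOn).continuousOn (finite_uSing hF hG)
    fun _ hu => contDiffAt_fst hF hG hu

lemma piecewiseC1_snd (hF : InG F) (hG : InG G) : PiecewiseC1 (snd F G) :=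
  piecewiseC1_of_contDiffAt
    ((continuous_const.mul continuous_id).sub (continuous_fst hG.monotoneOn)).continuousOn
    (finite_uSing hF hG) fun _ hu => contDiffAt_snd hF hG hu

lemma finiteFlats_fst (hF : InG F) (hG : InG G) : FiniteFlats (fst F G) := by
  refine IsFiniteUnionOfIntervals.finite_connectedComponentIn
    (IsFiniteUnionOfIntervals.of_diff_eq (S := ⋃ t ∈ tSing F G, Icc 0 1 ∩ fst F G ⁻¹' {t})
      (IsFiniteUnionOfIntervals.biUnion (finite_tSing hF hG) fun _ _ =>
        ordConnected_singleton.isFiniteUnionOfIntervals.preimage (monotone_fst.monotoneOn _)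
          ordConnected_Icc) (finite_uSing hF hG) ?_)
  ext u
  refine and_congr_left fun hU => ⟨fun ⟨hu, hd⟩ => ?_, fun h => ?_⟩
  · by_contra hT
    obtain ⟨-, hne, -⟩ :=
      contDiffAt_fst_of_notMem_tSing hF hG fun hT' => hT (mem_biUnion hT' ⟨hu, rfl⟩)
    exact hne hd
  · obtain ⟨t, hT, hu, rfl⟩ := mem_iUnion₂.1 h
    exact ⟨hu, by rw [(fst_eventuallyEq_of_mem_tSing hu hU hT).deriv_eq, deriv_const]⟩

lemma finiteFlats_snd (hF : InG F) (hG : InG G) : FiniteFlats (snd F G) := by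
  refine IsFiniteUnionOfIntervals.finite_connectedComponentIn
    (IsFiniteUnionOfIntervals.of_diff_eq
      (S := Icc 0 1 ∩ fst F G ⁻¹' ({t ∈ Icc 0 1 | deriv G t = 0} \ tSing F G))
      (((IsFiniteUnionOfIntervals.of_finite_connectedComponentIn hG.finiteFlats).diff_finite
        (finite_tSing hF hG)).preimage (monotone_fst.monotoneOn _) ordConnected_Icc)
      (finite_uSing hF hG) ?_)
  ext u
  refine and_congr_left fun hU => ?_
  refine ⟨fun ⟨hu, hd⟩ => ?_, fun ⟨hu, ⟨_, hG0⟩, hT⟩ => ⟨hu, ?_⟩⟩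
  · rw [deriv_snd ((contDiffAt_fst hF hG ⟨mem_Ioo_of_notMem_uSing hu hU, hU⟩).differentiableAt
      one_ne_zero)] at hd
    by_cases hT : fst F G u ∈ tSing F G
    · rw [(fst_eventuallyEq_of_mem_tSing hu hU hT).deriv_eq, deriv_const] at hd
      norm_num at hd
    · obtain ⟨-, -, hiff⟩ := contDiffAt_fst_of_notMem_tSing hF hG hT
      exact ⟨hu, ⟨fst_mem_Icc, hiff.1 (by linarith)⟩, hT⟩
  · obtain ⟨hC, -, hiff⟩ := contDiffAt_fst_of_notMem_tSing hF hG hT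
    rw [deriv_snd (hC.differentiableAt one_ne_zero), hiff.2 hG0]
    norm_num

lemma inG_fst (hF : InG F) (hG : InG G) : InG (fst F G) :=
  ⟨⟨piecewiseC1_fst hF hG, finiteFlats_fst hF hG⟩, monotone_fst.monotoneOn _,
    fst_zero hG.monotoneOn, fst_one⟩

lemma inG_snd (hF : InG F) (hG : InG G) : InG (snd F G) :=
  ⟨⟨piecewiseC1_snd hF hG, finiteFlats_snd hF hG⟩, (monotone_snd hG.monotoneOn).monotoneOn _,
    snd_zero hG.monotoneOn, snd_one⟩

lemma arcLen_half_mem_Icc (ht : t ∈ Icc 0 1) : arcLen F G t / 2 ∈ Icc 0 1 :=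
  ⟨by linarith [le_arcLen (F := F) (G := G) (t := t), ht.1],
    by linarith [arcLen_le_two (F := F) (G := G) ht.2]⟩

end GraphCurve

theorem graph_in_curve_general (F G : ℝ → ℝ)
    (hF : InG F) (hG : InG G) :
    ∃ h₁ h₂ : ℝ → ℝ, InG h₁ ∧ InG h₂ ∧
      (∀ t ∈ Set.Icc (0:ℝ) 1, G (h₁ t) = F (h₂ t)) ∧
      (∀ t ∈ Set.Icc (0:ℝ) 1, ∃ u ∈ Set.Icc (0:ℝ) 1,
        h₁ u = t ∧ h₂ u = genInv 0 1 F (G t)) := by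
  refine ⟨GraphCurve.fst F G, GraphCurve.snd F G, GraphCurve.inG_fst hF hG,
    GraphCurve.inG_snd hF hG, fun u hu => GraphCurve.apply_fst_eq_apply_snd hF hG hu,
    fun t ht => ?_⟩
  exact ⟨GraphCurve.arcLen F G t / 2, GraphCurve.arcLen_half_mem_Icc ht,
    GraphCurve.fst_arcLen_half hG.monotoneOn ht, GraphCurve.snd_arcLen_half hG.monotoneOn ht⟩

/-- if `G ∘ h̃₁ = F ∘ h̃₂` on `[0,1]` for `F, G, h̃₁, h̃₂ ∈ 𝒢`, then there
exist `h₁, h₂ ∈ 𝒢` with `G ∘ h₁ = F ∘ h₂` on `[0,1]` whose curve `u ↦ (h₁ u, h₂ u)`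
contains the graph of `F† ∘ G`. -/
theorem graph_in_curve (F G ht₁ ht₂ : ℝ → ℝ)
    (hF : InG F) (hG : InG G) (hht₁ : InG ht₁) (hht₂ : InG ht₂)
    (hmatch : ∀ t ∈ Set.Icc (0:ℝ) 1, G (ht₁ t) = F (ht₂ t)) :
    ∃ h₁ h₂ : ℝ → ℝ, InG h₁ ∧ InG h₂ ∧
      (∀ t ∈ Set.Icc (0:ℝ) 1, G (h₁ t) = F (h₂ t)) ∧
      (∀ t ∈ Set.Icc (0:ℝ) 1, ∃ u ∈ Set.Icc (0:ℝ) 1,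
        h₁ u = t ∧ h₂ u = genInv 0 1 F (G t)) :=
  graph_in_curve_general F G hF hG
end

section
/- Let s ∈ C¹_FF([0,1]) and let t₀, t₁, …, t_n ∈ C¹_FF([0,1]) be training samples such that s ∼ t₀ (i.e., s∘g₁ = t₀∘g₂ for some g₁,g₂ ∈ 𝒢), and for each j = 1,…,n, s ≁ t_j and the infimum defining CDTW(s,t_j) is attained by some path in 𝒢×𝒢. Then CDTW(s,t₀) = 0 and CDTW(s,t_j) > 0 for every j = 1,…,n; consequently t₀ is the unique minimizer of CDTW(s,·) over {t₀,…,t_n} and nearest-neighbor classification with CDTW recovers the class of s. -/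
open Set MeasureTheory

/-- The warping relation: `s ∼ φ` iff `s ∘ g₁ = φ ∘ g₂` on `[0,1]` for some `g₁, g₂ ∈ 𝒢`. -/
def WarpRel (s φ : ℝ → ℝ) : Prop :=
  ∃ g₁ g₂ : ℝ → ℝ, InG g₁ ∧ InG g₂ ∧ ∀ t ∈ Set.Icc (0:ℝ) 1, s (g₁ t) = φ (g₂ t)

/-- Cost of the continuous warping path `γ(t) = (g₁ t, g₂ t)`. -/
noncomputable def warpCost (s φ g₁ g₂ : ℝ → ℝ) : ℝ :=
  ∫ t in (0:ℝ)..1, |s (g₁ t) - φ (g₂ t)| * (deriv g₁ t + deriv g₂ t)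

/-- Continuous dynamic time warping divergence: infimum of warp costs over `𝒢 × 𝒢`. -/
noncomputable def CDTW (s φ : ℝ → ℝ) : ℝ :=
  sInf {c : ℝ | ∃ g₁ g₂ : ℝ → ℝ, InG g₁ ∧ InG g₂ ∧ warpCost s φ g₁ g₂ = c}


open Filter Topology in
lemma my_deriv_nonneg {g : ℝ → ℝ} (hg : MonotoneOn g (Set.Icc 0 1))
    {x : ℝ} (hx : x ∈ Set.Icc (0:ℝ) 1) : 0 ≤ deriv g x := by
  by_cases hd : DifferentiableAt ℝ g x
  · rcases lt_or_eq_of_le hx.2 with h1 | h1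
    · have hne : (𝓝[Set.Ioo x 1] x).NeBot := by
        rw [← mem_closure_iff_nhdsWithin_neBot, closure_Ioo h1.ne]
        exact ⟨le_rfl, h1.le⟩
      have hslope : Tendsto (slope g x) (𝓝[Set.Ioo x 1] x) (𝓝 (deriv g x)) := by
        have h := (hd.hasDerivAt.hasDerivWithinAt (s := Set.Ioo x 1))
        rwa [hasDerivWithinAt_iff_tendsto_slope' (by simp)] at h
      refine ge_of_tendsto hslope ?_
      filter_upwards [eventually_mem_nhdsWithin] with u hu
      rw [slope_def_field]
      have hux : x ≤ u := hu.1.le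
      have hu1 : u ∈ Set.Icc (0:ℝ) 1 := ⟨hx.1.trans hux, hu.2.le⟩
      exact div_nonneg (sub_nonneg.2 (hg hx hu1 hux)) (sub_nonneg.2 hux)
    · have h0 : (0:ℝ) < x := by rw [h1]; norm_num
      have hne : (𝓝[Set.Ioo 0 x] x).NeBot := by
        rw [← mem_closure_iff_nhdsWithin_neBot, closure_Ioo h0.ne]
        exact ⟨h0.le, le_rfl⟩
      have hslope : Tendsto (slope g x) (𝓝[Set.Ioo 0 x] x) (𝓝 (deriv g x)) := by
        have h := (hd.hasDerivAt.hasDerivWithinAt (s := Set.Ioo 0 x))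
        rwa [hasDerivWithinAt_iff_tendsto_slope' (by simp)] at h
      refine ge_of_tendsto hslope ?_
      filter_upwards [eventually_mem_nhdsWithin] with u hu
      rw [slope_def_field]
      have hux : u ≤ x := hu.2.le
      have hu1 : u ∈ Set.Icc (0:ℝ) 1 := ⟨hu.1.le, hux.trans hx.2⟩
      exact div_nonneg_of_nonpos (sub_nonpos.2 (hg hu1 hx hux)) (sub_nonpos.2 hux)
  · rw [deriv_zero_of_not_differentiableAt hd]

lemma my_key (S : Finset ℝ) : ∀ (g : ℝ → ℝ) (a b : ℝ), a ≤ b →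
    ContinuousOn g (Set.Icc a b) →
    (∀ x ∈ Set.Ioo a b \ (S : Set ℝ), DifferentiableAt ℝ g x) →
    (∀ x ∈ Set.Ioo a b, 0 ≤ deriv g x) →
    IntegrableOn (deriv g) (Set.Ioc a b) ∧ g b - g a ≤ ∫ y in a..b, deriv g y := by
  induction S using Finset.induction_on with
  | empty =>
    intro g a b hab hcont hdiff hpos
    have hder : ∀ x ∈ Set.Ioo a b, HasDerivAt g (deriv g x) x := fun x hx =>
      (hdiff x (by simpa using hx)).hasDerivAt
    have hint : IntegrableOn (deriv g) (Set.Ioc a b) :=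
      intervalIntegral.integrableOn_deriv_of_nonneg hcont hder hpos
    refine ⟨hint, ?_⟩
    have hicc : IntegrableOn (deriv g) (Set.Icc a b) := by
      rwa [integrableOn_Icc_iff_integrableOn_Ioc]
    exact intervalIntegral.sub_le_integral_of_hasDeriv_right_of_le hab hcont
      (fun x hx => (hder x hx).hasDerivWithinAt) hicc (fun x _ => le_rfl)
  | @insert c S hcS IH =>
    intro g a b hab hcont hdiff hpos
    by_cases hc : c ∈ Set.Ioo a b
    · have hd1 : ∀ x ∈ Set.Ioo a c \ (S : Set ℝ), DifferentiableAt ℝ g x := by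
        intro x hx
        refine hdiff x ⟨⟨hx.1.1, hx.1.2.trans hc.2⟩, ?_⟩
        simp only [Finset.coe_insert, Set.mem_insert_iff]
        push_neg
        exact ⟨hx.1.2.ne, hx.2⟩
      have hd2 : ∀ x ∈ Set.Ioo c b \ (S : Set ℝ), DifferentiableAt ℝ g x := by
        intro x hx
        refine hdiff x ⟨⟨hc.1.trans hx.1.1, hx.1.2⟩, ?_⟩
        simp only [Finset.coe_insert, Set.mem_insert_iff]
        push_neg
        exact ⟨hx.1.1.ne', hx.2⟩
      have h1 := IH g a c hc.1.le (hcont.mono (Set.Icc_subset_Icc le_rfl hc.2.le)) hd1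
        (fun x hx => hpos x ⟨hx.1, hx.2.trans hc.2⟩)
      have h2 := IH g c b hc.2.le (hcont.mono (Set.Icc_subset_Icc hc.1.le le_rfl)) hd2
        (fun x hx => hpos x ⟨hc.1.trans hx.1, hx.2⟩)
      constructor
      · have := h1.1.union h2.1
        rwa [Set.Ioc_union_Ioc_eq_Ioc hc.1.le hc.2.le] at this
      · have i1 : IntervalIntegrable (deriv g) volume a c :=
          (intervalIntegrable_iff_integrableOn_Ioc_of_le hc.1.le).2 h1.1
        have i2 : IntervalIntegrable (deriv g) volume c b :=
          (intervalIntegrable_iff_integrableOn_Ioc_of_le hc.2.le).2 h2.1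
        have hadd := intervalIntegral.integral_add_adjacent_intervals i1 i2
        calc g b - g a = (g c - g a) + (g b - g c) := by ring
          _ ≤ (∫ y in a..c, deriv g y) + ∫ y in c..b, deriv g y := add_le_add h1.2 h2.2
          _ = ∫ y in a..b, deriv g y := hadd
    · refine IH g a b hab hcont ?_ hpos
      intro x hx
      refine hdiff x ⟨hx.1, ?_⟩
      simp only [Finset.coe_insert, Set.mem_insert_iff]
      push_neg
      exact ⟨fun h => hc (h ▸ hx.1), hx.2⟩

lemma InG.deriv_integrableOn {g : ℝ → ℝ} (hg : InG g) {x y : ℝ}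
    (hx : 0 ≤ x) (hxy : x ≤ y) (hy : y ≤ 1) : IntegrableOn (deriv g) (Set.Ioc x y) := by
  obtain ⟨⟨⟨hcont, S, hdiff, _⟩, _⟩, hmono, h0, h1⟩ := hg
  refine (my_key S g x y hxy (hcont.mono (Set.Icc_subset_Icc hx hy)) ?_ ?_).1
  · intro z hz
    exact hdiff z ⟨⟨hx.trans hz.1.1.le, hz.1.2.le.trans hy⟩, hz.2⟩
  · intro z hz
    exact my_deriv_nonneg hmono ⟨hx.trans hz.1.le, hz.2.le.trans hy⟩

lemma InG.sub_le_integral {g : ℝ → ℝ} (hg : InG g) {x y : ℝ}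
    (hx : 0 ≤ x) (hxy : x ≤ y) (hy : y ≤ 1) : g y - g x ≤ ∫ u in x..y, deriv g u := by
  obtain ⟨⟨⟨hcont, S, hdiff, _⟩, _⟩, hmono, h0, h1⟩ := hg
  refine (my_key S g x y hxy (hcont.mono (Set.Icc_subset_Icc hx hy)) ?_ ?_).2
  · intro z hz
    exact hdiff z ⟨⟨hx.trans hz.1.1.le, hz.1.2.le.trans hy⟩, hz.2⟩
  · intro z hz
    exact my_deriv_nonneg hmono ⟨hx.trans hz.1.le, hz.2.le.trans hy⟩

lemma InG.const_of_deriv_ae_zero {g : ℝ → ℝ} (hg : InG g) {x y : ℝ}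
    (hx : 0 ≤ x) (hxy : x ≤ y) (hy : y ≤ 1)
    (hz : ∀ᵐ u ∂(volume.restrict (Set.Ioo x y)), deriv g u = 0) : g x = g y := by
  have hle : g x ≤ g y := hg.2.1 ⟨hx, hxy.trans hy⟩ ⟨hx.trans hxy, hy⟩ hxy
  have hint : (∫ u in x..y, deriv g u) = 0 := by
    rw [intervalIntegral.integral_of_le hxy, integral_Ioc_eq_integral_Ioo]
    exact integral_eq_zero_of_ae (hz.mono fun u hu => hu)
  have h2 := hg.sub_le_integral hx hxy hy
  rw [hint] at h2
  linarith

lemma InG.mapsTo_s14 {g : ℝ → ℝ} (hg : InG g) {u : ℝ} (hu : u ∈ Set.Icc (0:ℝ) 1) :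
    g u ∈ Set.Icc (0:ℝ) 1 := by
  obtain ⟨_, hmono, h0, h1⟩ := hg
  constructor
  · have := hmono (Set.left_mem_Icc.2 zero_le_one) hu hu.1
    rwa [h0] at this
  · have := hmono hu (Set.right_mem_Icc.2 zero_le_one) hu.2
    rwa [h1] at this

lemma warp_eq_of_cost_zero {s φ g₁ g₂ : ℝ → ℝ}
    (hsc : ContinuousOn s (Set.Icc 0 1)) (hφc : ContinuousOn φ (Set.Icc 0 1))
    (hg₁ : InG g₁) (hg₂ : InG g₂) (hcost : warpCost s φ g₁ g₂ = 0) :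
    ∀ u ∈ Set.Icc (0:ℝ) 1, s (g₁ u) = φ (g₂ u) := by
  set h : ℝ → ℝ := fun u => s (g₁ u) - φ (g₂ u) with hh
  have hcost' : (∫ u in (0:ℝ)..1, |h u| * (deriv g₁ u + deriv g₂ u)) = 0 := by
    simpa [warpCost, hh] using hcost
  set f : ℝ → ℝ := fun u => |h u| * (deriv g₁ u + deriv g₂ u) with hf
  have hg₁c : ContinuousOn g₁ (Set.Icc 0 1) := hg₁.1.1.1
  have hg₂c : ContinuousOn g₂ (Set.Icc 0 1) := hg₂.1.1.1
  have hhc : ContinuousOn h (Set.Icc 0 1) :=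
    (hsc.comp hg₁c fun u hu => hg₁.mapsTo_s14 hu).sub (hφc.comp hg₂c fun u hu => hg₂.mapsTo_s14 hu)
  have hsum_nonneg : ∀ u ∈ Set.Icc (0:ℝ) 1, 0 ≤ deriv g₁ u + deriv g₂ u := fun u hu =>
    add_nonneg (my_deriv_nonneg hg₁.2.1 hu) (my_deriv_nonneg hg₂.2.1 hu)
  obtain ⟨M, hM⟩ := isCompact_Icc.exists_bound_of_continuousOn hhc
  have hDint : IntegrableOn (fun u => deriv g₁ u + deriv g₂ u) (Set.Ioc (0:ℝ) 1) :=
    (hg₁.deriv_integrableOn le_rfl zero_le_one le_rfl).add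
      (hg₂.deriv_integrableOn le_rfl zero_le_one le_rfl)
  have hmeas : AEStronglyMeasurable f (volume.restrict (Set.Ioc (0:ℝ) 1)) := by
    apply AEStronglyMeasurable.mul
    · exact ((hhc.mono Set.Ioc_subset_Icc_self).abs).aestronglyMeasurable measurableSet_Ioc
    · exact ((measurable_deriv g₁).add (measurable_deriv g₂)).aestronglyMeasurable
  have hfint : IntegrableOn f (Set.Ioc (0:ℝ) 1) := by
    refine Integrable.mono' (hDint.const_mul M) hmeas ?_
    refine (ae_restrict_iff' measurableSet_Ioc).2 (ae_of_all _ fun u hu => ?_)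
    have hu' : u ∈ Set.Icc (0:ℝ) 1 := Set.Ioc_subset_Icc_self hu
    have h1 : ‖f u‖ = |h u| * (deriv g₁ u + deriv g₂ u) := by
      rw [hf, Real.norm_eq_abs, abs_mul, abs_abs, abs_of_nonneg (hsum_nonneg u hu')]
    rw [h1]
    exact mul_le_mul_of_nonneg_right (by simpa [Real.norm_eq_abs] using hM u hu')
      (hsum_nonneg u hu')
  have hzero : f =ᵐ[volume.restrict (Set.Ioc (0:ℝ) 1)] 0 := by
    have hint01 : IntervalIntegrable f volume 0 1 :=
      (intervalIntegrable_iff_integrableOn_Ioc_of_le zero_le_one).2 hfint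
    have hnn : 0 ≤ᵐ[volume.restrict (Set.Ioc (0:ℝ) 1 ∪ Set.Ioc (1:ℝ) 0)] f := by
      rw [Set.Ioc_eq_empty (by norm_num : ¬(1:ℝ) < 0), Set.union_empty]
      exact (ae_restrict_iff' measurableSet_Ioc).2 (ae_of_all _ fun u hu =>
        mul_nonneg (abs_nonneg _) (hsum_nonneg u (Set.Ioc_subset_Icc_self hu)))
    have h2 := (intervalIntegral.integral_eq_zero_iff_of_nonneg_ae hnn hint01).1 hcost'
    rwa [Set.Ioc_eq_empty (by norm_num : ¬(1:ℝ) < 0), Set.union_empty] at h2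
  have key2 : ∀ x y : ℝ, 0 ≤ x → x ≤ y → y ≤ 1 → (∀ u ∈ Set.Ioo x y, h u ≠ 0) →
      g₁ x = g₁ y ∧ g₂ x = g₂ y := by
    intro x y hx hxy hy hne
    have hsub : Set.Ioo x y ⊆ Set.Ioc (0:ℝ) 1 := fun u hu =>
      ⟨hx.trans_lt hu.1, hu.2.le.trans hy⟩
    have hz : ∀ᵐ u ∂(volume.restrict (Set.Ioo x y)), deriv g₁ u = 0 ∧ deriv g₂ u = 0 := by
      have h1 : ∀ᵐ u ∂(volume.restrict (Set.Ioo x y)), f u = 0 :=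
        ae_restrict_of_ae_restrict_of_subset hsub hzero
      have h2 : ∀ᵐ u ∂(volume.restrict (Set.Ioo x y)), u ∈ Set.Ioo x y :=
        (ae_restrict_iff' measurableSet_Ioo).2 (ae_of_all _ fun u hu => hu)
      filter_upwards [h1, h2] with u hfu hu
      have hu' : u ∈ Set.Icc (0:ℝ) 1 := Set.Ioc_subset_Icc_self (hsub hu)
      have habs : |h u| ≠ 0 := abs_ne_zero.2 (hne u hu)
      have hsum : deriv g₁ u + deriv g₂ u = 0 := by
        rcases mul_eq_zero.1 hfu with h' | h'
        · exact absurd h' habs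
        · exact h'
      exact (add_eq_zero_iff_of_nonneg (my_deriv_nonneg hg₁.2.1 hu')
        (my_deriv_nonneg hg₂.2.1 hu')).1 hsum
    exact ⟨hg₁.const_of_deriv_ae_zero hx hxy hy (hz.mono fun u hu => hu.1),
      hg₂.const_of_deriv_ae_zero hx hxy hy (hz.mono fun u hu => hu.2)⟩
  intro u₀ hu₀
  by_contra hne0
  have hh0 : h u₀ ≠ 0 := sub_ne_zero.2 hne0
  by_cases hB : ∃ u ∈ Set.Icc u₀ 1, h u = 0
  · set B := {u ∈ Set.Icc u₀ 1 | h u = 0} with hBdef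
    have hBcl : IsClosed B := by
      have hBeq : B = Set.Icc u₀ 1 ∩ h ⁻¹' {0} := by ext u; simp [hBdef]
      rw [hBeq]
      exact (hhc.mono (Set.Icc_subset_Icc hu₀.1 le_rfl)).preimage_isClosed_of_isClosed
        isClosed_Icc isClosed_singleton
    have hBne : B.Nonempty := by obtain ⟨u, hu1, hu2⟩ := hB; exact ⟨u, hu1, hu2⟩
    have hBbdd : BddBelow B := ⟨u₀, fun u hu => hu.1.1⟩
    have hbB : sInf B ∈ B := hBcl.csInf_mem hBne hBbdd
    have hub : u₀ ≤ sInf B := hbB.1.1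
    have hb1 : sInf B ≤ 1 := hbB.1.2
    have hninterval : ∀ u ∈ Set.Ioo u₀ (sInf B), h u ≠ 0 := by
      intro u hu hcontra
      have hmem : u ∈ B := ⟨⟨hu.1.le, hu.2.le.trans hb1⟩, hcontra⟩
      exact absurd (csInf_le hBbdd hmem) (not_le.2 hu.2)
    have hgs := key2 u₀ (sInf B) hu₀.1 hub hb1 hninterval
    have heq : h u₀ = h (sInf B) := by rw [hh]; simp only; rw [hgs.1, hgs.2]
    rw [hbB.2] at heq
    exact hh0 heq
  · by_cases hA : ∃ u ∈ Set.Icc (0:ℝ) u₀, h u = 0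
    · set A := {u ∈ Set.Icc (0:ℝ) u₀ | h u = 0} with hAdef
      have hAcl : IsClosed A := by
        have hAeq : A = Set.Icc (0:ℝ) u₀ ∩ h ⁻¹' {0} := by ext u; simp [hAdef]
        rw [hAeq]
        exact (hhc.mono (Set.Icc_subset_Icc le_rfl hu₀.2)).preimage_isClosed_of_isClosed
          isClosed_Icc isClosed_singleton
      have hAne : A.Nonempty := by obtain ⟨u, hu1, hu2⟩ := hA; exact ⟨u, hu1, hu2⟩
      have hAbdd : BddAbove A := ⟨u₀, fun u hu => hu.1.2⟩
      have haA : sSup A ∈ A := hAcl.csSup_mem hAne hAbdd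
      have ha0 : 0 ≤ sSup A := haA.1.1
      have hau : sSup A ≤ u₀ := haA.1.2
      have hninterval : ∀ u ∈ Set.Ioo (sSup A) u₀, h u ≠ 0 := by
        intro u hu hcontra
        have hmem : u ∈ A := ⟨⟨ha0.trans hu.1.le, hu.2.le⟩, hcontra⟩
        exact absurd (le_csSup hAbdd hmem) (not_le.2 hu.1)
      have hgs := key2 (sSup A) u₀ ha0 hau hu₀.2 hninterval
      have heq : h u₀ = h (sSup A) := by rw [hh]; simp only; rw [hgs.1, hgs.2]
      rw [haA.2] at heq
      exact hh0 heq
    · have hall : ∀ u ∈ Set.Ioo (0:ℝ) 1, h u ≠ 0 := by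
        intro u hu hc
        rcases le_total u u₀ with hle | hle
        · exact hA ⟨u, ⟨hu.1.le, hle⟩, hc⟩
        · exact hB ⟨u, ⟨hle, hu.2.le⟩, hc⟩
      have hgs := key2 0 1 le_rfl zero_le_one le_rfl hall
      have h01 : (0:ℝ) = 1 := by rw [← hg₁.2.2.1, ← hg₁.2.2.2, hgs.1]
      norm_num at h01

lemma warpCost_nonneg {s φ g₁ g₂ : ℝ → ℝ} (hg₁ : InG g₁) (hg₂ : InG g₂) :
    0 ≤ warpCost s φ g₁ g₂ :=
  intervalIntegral.integral_nonneg zero_le_one fun u hu =>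
    mul_nonneg (abs_nonneg _)
      (add_nonneg (my_deriv_nonneg hg₁.2.1 hu) (my_deriv_nonneg hg₂.2.1 hu))

lemma CDTW_nonneg_lb {s φ : ℝ → ℝ} :
    ∀ c ∈ {c : ℝ | ∃ g₁ g₂ : ℝ → ℝ, InG g₁ ∧ InG g₂ ∧ warpCost s φ g₁ g₂ = c}, 0 ≤ c := by
  rintro c ⟨g₁, g₂, hg₁, hg₂, rfl⟩
  exact warpCost_nonneg hg₁ hg₂

/-- if `s ∼ t₀` and, for `j = 1, …, n`, `s ≁ t_j` with the infimum
defining `CDTW(s, t_j)` attained in `𝒢 × 𝒢`, then `CDTW(s, t₀) = 0`, `CDTW(s, t_j) > 0`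
for `j = 1, …, n`, and `t₀` is the unique minimizer: nearest-neighbor classification with
CDTW recovers the class of `s`. -/
theorem CDTW_nearest_neighbor (n : ℕ) (s : ℝ → ℝ) (t : ℕ → ℝ → ℝ)
    (hs : C1FF s) (ht : ∀ j ≤ n, C1FF (t j))
    (h0 : WarpRel s (t 0))
    (hne : ∀ j, 1 ≤ j → j ≤ n → ¬ WarpRel s (t j))
    (hatt : ∀ j, 1 ≤ j → j ≤ n → ∃ g₁ g₂ : ℝ → ℝ, InG g₁ ∧ InG g₂ ∧
      warpCost s (t j) g₁ g₂ = CDTW s (t j)) :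
    CDTW s (t 0) = 0 ∧
    (∀ j, 1 ≤ j → j ≤ n → 0 < CDTW s (t j)) ∧
    (∀ j, 1 ≤ j → j ≤ n → CDTW s (t 0) < CDTW s (t j)) := by
  have habove : BddBelow {c : ℝ | ∃ g₁ g₂ : ℝ → ℝ, InG g₁ ∧ InG g₂ ∧ warpCost s (t 0) g₁ g₂ = c} :=
    ⟨0, CDTW_nonneg_lb⟩
  have h1 : CDTW s (t 0) = 0 := by
    obtain ⟨g₁, g₂, hg₁, hg₂, heq⟩ := h0
    have hw : warpCost s (t 0) g₁ g₂ = 0 := by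
      rw [warpCost]
      have hEq : Set.EqOn (fun u => |s (g₁ u) - t 0 (g₂ u)| * (deriv g₁ u + deriv g₂ u))
          (fun _ => (0:ℝ)) (Set.uIcc 0 1) := by
        intro u hu
        have hu' : u ∈ Set.Icc (0:ℝ) 1 := by rwa [Set.uIcc_of_le zero_le_one] at hu
        simp [heq u hu']
      rw [intervalIntegral.integral_congr hEq, intervalIntegral.integral_zero]
    apply le_antisymm
    · exact csInf_le habove ⟨g₁, g₂, hg₁, hg₂, hw⟩
    · exact le_csInf ⟨_, g₁, g₂, hg₁, hg₂, rfl⟩ CDTW_nonneg_lb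
  have h2 : ∀ j, 1 ≤ j → j ≤ n → 0 < CDTW s (t j) := by
    intro j hj1 hjn
    obtain ⟨g₁, g₂, hg₁, hg₂, hatt'⟩ := hatt j hj1 hjn
    have hge : 0 ≤ CDTW s (t j) :=
      le_csInf ⟨_, g₁, g₂, hg₁, hg₂, rfl⟩ CDTW_nonneg_lb
    rcases hge.lt_or_eq with hlt | heq0
    · exact hlt
    · exfalso
      apply hne j hj1 hjn
      exact ⟨g₁, g₂, hg₁, hg₂,
        warp_eq_of_cost_zero hs.1.1 ((ht j hjn).1.1) hg₁ hg₂ (by rw [hatt', ← heq0])⟩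
  exact ⟨h1, h2, fun j hj1 hjn => h1 ▸ h2 j hj1 hjn⟩
end
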